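/- arXiv:2603.27712 — 6 statements merged into one kernel-verified Lean document; each statement's English description precedes it below -/
import Mathlib

section
/- Let G : ℝ^d → ℝ be convex and s, β > 0. Then the function x ↦ log ∫_{ℝ^d} exp( G(z + x/(1+βs)) − ((1+βs)/(2s))|z|² ) dz is convex in x (assuming the integrals are finite for all x). -/
open Set MeasureTheory

/-! For each `z` the exponent `x ↦ G (z + x / (1 + βs)) - (1 + βs) / (2s) ‖z‖²` is convex, so at a
convex combination `a • x + b • y` the integrand is at most the weighted geometric mean of the
integrands at `x` and `y`. Hölder's inequality with exponents `1/a`, `1/b` turns this into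
`I (a • x + b • y) ≤ I x ^ a * I y ^ b` for the integral `I`, which is log-convexity. -/

section Holder

variable {α : Type*} [MeasurableSpace α] {μ : Measure α} {f g : α → ℝ} {a b : ℝ}

theorem MeasureTheory.Integrable.rpow_mul_rpow (hf : Integrable f μ) (hg : Integrable g μ)
    (hf₀ : 0 ≤ᵐ[μ] f) (hg₀ : 0 ≤ᵐ[μ] g) (ha : 0 ≤ a) (hb : 0 ≤ b) (hab : a + b = 1) :
    Integrable (fun x => f x ^ a * g x ^ b) μ := by
  refine ((hf.const_mul a).add (hg.const_mul b)).mono'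
    ((hf.1.aemeasurable.pow_const a).mul (hg.1.aemeasurable.pow_const b)).aestronglyMeasurable ?_
  filter_upwards [hf₀, hg₀] with x hfx hgx
  rw [Real.norm_of_nonneg (mul_nonneg (Real.rpow_nonneg hfx a) (Real.rpow_nonneg hgx b))]
  exact Real.geom_mean_le_arith_mean2_weighted ha hb hfx hgx hab

theorem integral_rpow_mul_rpow_le (hf : Integrable f μ) (hg : Integrable g μ)
    (hf₀ : 0 ≤ᵐ[μ] f) (hg₀ : 0 ≤ᵐ[μ] g) (ha : 0 ≤ a) (hb : 0 ≤ b) (hab : a + b = 1) :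
    ∫ x, f x ^ a * g x ^ b ∂μ ≤ (∫ x, f x ∂μ) ^ a * (∫ x, g x ∂μ) ^ b := by
  have hF₀ : 0 ≤ ∫ x, f x ∂μ := integral_nonneg_of_ae hf₀
  have hG₀ : 0 ≤ ∫ x, g x ∂μ := integral_nonneg_of_ae hg₀
  have hfg₀ : 0 ≤ᵐ[μ] fun x => f x ^ a * g x ^ b := by
    filter_upwards [hf₀, hg₀] with x hfx hgx
    exact mul_nonneg (Real.rpow_nonneg hfx a) (Real.rpow_nonneg hgx b)
  rw [← ENNReal.ofReal_le_ofReal_iff (by positivity), ENNReal.ofReal_mul (by positivity),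
    ← ENNReal.ofReal_rpow_of_nonneg hF₀ ha, ← ENNReal.ofReal_rpow_of_nonneg hG₀ hb,
    ofReal_integral_eq_lintegral_ofReal (hf.rpow_mul_rpow hg hf₀ hg₀ ha hb hab) hfg₀,
    ofReal_integral_eq_lintegral_ofReal hf hf₀, ofReal_integral_eq_lintegral_ofReal hg hg₀]
  calc ∫⁻ x, ENNReal.ofReal (f x ^ a * g x ^ b) ∂μ
      = ∫⁻ x, ENNReal.ofReal (f x) ^ a * ENNReal.ofReal (g x) ^ b ∂μ := by
        refine lintegral_congr_ae ?_
        filter_upwards [hf₀, hg₀] with x hfx hgx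
        rw [ENNReal.ofReal_mul (Real.rpow_nonneg hfx a), ENNReal.ofReal_rpow_of_nonneg hfx ha,
          ENNReal.ofReal_rpow_of_nonneg hgx hb]
    _ ≤ _ := ENNReal.lintegral_mul_norm_pow_le hf.1.aemeasurable.ennreal_ofReal
        hg.1.aemeasurable.ennreal_ofReal ha hb hab

end Holder

theorem convexOn_log_integral_exp {α E : Type*} [MeasurableSpace α] {μ : Measure α} [NeZero μ]
    [AddCommGroup E] [Module ℝ E] {s : Set E} {φ : E → α → ℝ} (hs : Convex ℝ s)
    (hφ : ∀ z, ConvexOn ℝ s (φ · z)) (hint : ∀ x ∈ s, Integrable (fun z => Real.exp (φ x z)) μ) :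
    ConvexOn ℝ s (fun x => Real.log (∫ z, Real.exp (φ x z) ∂μ)) := by
  refine ⟨hs, fun x hx y hy a b ha hb hab => ?_⟩
  set I : E → ℝ := fun x => ∫ z, Real.exp (φ x z) ∂μ
  have hI : ∀ x ∈ s, 0 < I x := fun x hx => integral_exp_pos (hint x hx)
  have hexp₀ : ∀ x, 0 ≤ᵐ[μ] fun z => Real.exp (φ x z) :=
    fun x => Filter.Eventually.of_forall fun z => (Real.exp_pos _).le
  have hpointwise : ∀ z, Real.exp (φ (a • x + b • y) z) ≤
      Real.exp (φ x z) ^ a * Real.exp (φ y z) ^ b := fun z => by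
    rw [← Real.exp_mul, ← Real.exp_mul, ← Real.exp_add, mul_comm _ a, mul_comm _ b]
    exact Real.exp_le_exp.2 ((hφ z).2 hx hy ha hb hab)
  have hHolder : I (a • x + b • y) ≤ I x ^ a * I y ^ b :=
    calc I (a • x + b • y)
        ≤ ∫ z, Real.exp (φ x z) ^ a * Real.exp (φ y z) ^ b ∂μ :=
          integral_mono (hint _ (hs hx hy ha hb hab))
            ((hint x hx).rpow_mul_rpow (hint y hy) (hexp₀ x) (hexp₀ y) ha hb hab)
            hpointwise
      _ ≤ I x ^ a * I y ^ b :=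
          integral_rpow_mul_rpow_le (hint x hx) (hint y hy) (hexp₀ x) (hexp₀ y) ha hb hab
  calc Real.log (I (a • x + b • y))
      ≤ Real.log (I x ^ a * I y ^ b) := Real.log_le_log (hI _ (hs hx hy ha hb hab)) hHolder
    _ = a • Real.log (I x) + b • Real.log (I y) := by
        rw [Real.log_mul (Real.rpow_pos_of_pos (hI x hx) a).ne'
            (Real.rpow_pos_of_pos (hI y hy) b).ne',
          Real.log_rpow (hI x hx), Real.log_rpow (hI y hy), smul_eq_mul, smul_eq_mul]

theorem stmt3_general {d : ℕ} (G : EuclideanSpace ℝ (Fin d) → ℝ) (s β : ℝ)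
    (hG : ConvexOn ℝ Set.univ G)
    (hint : ∀ x : EuclideanSpace ℝ (Fin d), Integrable
      (fun z : EuclideanSpace ℝ (Fin d) =>
        Real.exp (G (z + (1 / (1 + β * s)) • x) - (1 + β * s) / (2 * s) * ‖z‖ ^ 2))) :
    ConvexOn ℝ Set.univ (fun x : EuclideanSpace ℝ (Fin d) =>
      Real.log (∫ z : EuclideanSpace ℝ (Fin d),
        Real.exp (G (z + (1 / (1 + β * s)) • x) - (1 + β * s) / (2 * s) * ‖z‖ ^ 2))) := by
  refine convexOn_log_integral_exp convex_univ (fun z => ?_) fun x _ => hint x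
  have hshift : ConvexOn ℝ univ fun x => G (z + (1 / (1 + β * s)) • x) :=
    hG.comp_affineMap (AffineMap.const ℝ (EuclideanSpace ℝ (Fin d)) z +
      (1 / (1 + β * s)) • AffineMap.id ℝ (EuclideanSpace ℝ (Fin d)))
  exact hshift.sub (concaveOn_const _ convex_univ)

theorem stmt3 {d : ℕ} (G : EuclideanSpace ℝ (Fin d) → ℝ) (s β : ℝ)
    (hs : 0 < s) (hβ : 0 < β) (hG : ConvexOn ℝ Set.univ G)
    (hint : ∀ x : EuclideanSpace ℝ (Fin d), Integrable
      (fun z : EuclideanSpace ℝ (Fin d) =>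
        Real.exp (G (z + (1 / (1 + β * s)) • x) - (1 + β * s) / (2 * s) * ‖z‖ ^ 2))) :
    ConvexOn ℝ Set.univ (fun x : EuclideanSpace ℝ (Fin d) =>
      Real.log (∫ z : EuclideanSpace ℝ (Fin d),
        Real.exp (G (z + (1 / (1 + β * s)) • x) - (1 + β * s) / (2 * s) * ‖z‖ ^ 2))) :=
  stmt3_general G s β hG hint
end

section
/- Let φ : ℝ^d → ℝ be β-convex with β > 0, let 0 < s, and define u_s(x) := log( (2πs)^{−d/2} ∫ exp(φ(y) − |x−y|²/(2s)) dy ), assumed finite for all x. Then the function x ↦ u_s(x) + (κ(s)/2)|x|² is convex, where κ(s) := β/(1+βs). In particular D²u_s ⪰ −κ(s)·Id in the sense of distributions (or wherever u_s is twice differentiable). -/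
/-!
Write `a = 1 + β s` and `ψ = φ + (β/2)|·|²`. Completing the square after the substitution
`y = x/a + w` gives
  `φ(y) - |x - y|²/(2s) + (κ(s)/2)|x|² = ψ(x/a + w) - (a/(2s))|w|²`,
so `exp(u_s(x) + (κ(s)/2)|x|²)` is, up to a constant, `∫ exp(ψ(x/a + w) - (a/(2s))|w|²) dw`:
an integral of functions that are log-convex in `x`. Such integrals are log-convex by Hölder's
inequality.
-/

open Set MeasureTheory Real

theorem integral_le_of_le_rpow_mul_rpow {α : Type*} [MeasurableSpace α] {μ : Measure α}
    {F₀ F₁ H : α → ℝ} {p q : ℝ} (hp : 0 ≤ p) (hq : 0 ≤ q) (hpq : p + q = 1)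
    (hF₀ : 0 ≤ F₀) (hF₁ : 0 ≤ F₁) (hH : 0 ≤ H)
    (hF₀i : Integrable F₀ μ) (hF₁i : Integrable F₁ μ) (hHi : Integrable H μ)
    (hle : ∀ x, H x ≤ F₀ x ^ p * F₁ x ^ q) :
    ∫ x, H x ∂μ ≤ (∫ x, F₀ x ∂μ) ^ p * (∫ x, F₁ x ∂μ) ^ q := by
  have hI₀ := integral_nonneg (μ := μ) hF₀
  have hI₁ := integral_nonneg (μ := μ) hF₁
  rw [← ENNReal.ofReal_le_ofReal_iff (by positivity),
    ofReal_integral_eq_lintegral_ofReal hHi (.of_forall hH),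
    ENNReal.ofReal_mul (by positivity), ← ENNReal.ofReal_rpow_of_nonneg hI₀ hp,
    ← ENNReal.ofReal_rpow_of_nonneg hI₁ hq,
    ofReal_integral_eq_lintegral_ofReal hF₀i (.of_forall hF₀),
    ofReal_integral_eq_lintegral_ofReal hF₁i (.of_forall hF₁)]
  refine le_trans (lintegral_mono fun x => ?_) (ENNReal.lintegral_mul_norm_pow_le
    hF₀i.aemeasurable.ennreal_ofReal hF₁i.aemeasurable.ennreal_ofReal hp hq hpq)
  rw [ENNReal.ofReal_rpow_of_nonneg (hF₀ x) hp, ENNReal.ofReal_rpow_of_nonneg (hF₁ x) hq,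
    ← ENNReal.ofReal_mul (rpow_nonneg (hF₀ x) p)]
  exact ENNReal.ofReal_le_ofReal (hle x)

theorem ConvexOn.log_integral_exp {α E : Type*} [MeasurableSpace α] {μ : Measure α} [NeZero μ]
    [AddCommGroup E] [Module ℝ E] {s : Set E} {G : E → α → ℝ} (hs : Convex ℝ s)
    (hG : ∀ y, ConvexOn ℝ s (G · y)) (hint : ∀ x ∈ s, Integrable (fun y => exp (G x y)) μ) :
    ConvexOn ℝ s (fun x => log (∫ y, exp (G x y) ∂μ)) := by
  refine ⟨hs, fun x₀ hx₀ x₁ hx₁ p q hp hq hpq => ?_⟩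
  have hI₀ := integral_exp_pos (hint x₀ hx₀)
  have hI₁ := integral_exp_pos (hint x₁ hx₁)
  have hHolder := integral_le_of_le_rpow_mul_rpow hp hq hpq (fun _ => (exp_pos _).le)
    (fun _ => (exp_pos _).le) (fun _ => (exp_pos _).le) (hint x₀ hx₀) (hint x₁ hx₁)
    (hint _ (hs hx₀ hx₁ hp hq hpq)) fun y => by
      rw [← exp_mul, ← exp_mul, ← exp_add, mul_comm _ p, mul_comm _ q]
      exact exp_le_exp.2 ((hG y).2 hx₀ hx₁ hp hq hpq)
  calc log (∫ y, exp (G (p • x₀ + q • x₁) y) ∂μ)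
      ≤ log ((∫ y, exp (G x₀ y) ∂μ) ^ p * (∫ y, exp (G x₁ y) ∂μ) ^ q) :=
        log_le_log (integral_exp_pos (hint _ (hs hx₀ hx₁ hp hq hpq))) hHolder
    _ = p • log (∫ y, exp (G x₀ y) ∂μ) + q • log (∫ y, exp (G x₁ y) ∂μ) := by
        rw [log_mul (rpow_pos_of_pos hI₀ p).ne' (rpow_pos_of_pos hI₁ q).ne', log_rpow hI₀,
          log_rpow hI₁, smul_eq_mul, smul_eq_mul]

theorem ConvexOn.comp_smul_add {E : Type*} [AddCommGroup E] [Module ℝ E] {f : E → ℝ}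
    (hf : ConvexOn ℝ univ f) (a : ℝ) (w : E) : ConvexOn ℝ univ fun x => f (a • x + w) :=
  ((hf.translate_left w).comp_linearMap (a • LinearMap.id)).subset (fun _ _ => trivial) convex_univ

theorem neg_norm_sub_sq_div_add_norm_sq_eq {E : Type*} [NormedAddCommGroup E]
    [InnerProductSpace ℝ E] {β s : ℝ} (hs : s ≠ 0) (ha : 1 + β * s ≠ 0) (x w : E) :
    -‖x - ((1 + β * s)⁻¹ • x + w)‖ ^ 2 / (2 * s) + β / (1 + β * s) / 2 * ‖x‖ ^ 2
      = β / 2 * ‖(1 + β * s)⁻¹ • x + w‖ ^ 2 - (1 + β * s) / (2 * s) * ‖w‖ ^ 2 := by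
  rw [sub_add_eq_sub_sub, norm_sub_sq_real, norm_sub_sq_real, norm_add_sq_real]
  simp only [inner_sub_left, real_inner_smul_left, real_inner_smul_right, norm_smul,
    real_inner_self_eq_norm_sq, Real.norm_eq_abs, mul_pow, sq_abs]
  field_simp
  ring

theorem stmt4 {d : ℕ} (β s : ℝ) (hβ : 0 < β) (hs : 0 < s)
    (φ : EuclideanSpace ℝ (Fin d) → ℝ)
    (hφ : ConvexOn ℝ Set.univ (fun x => φ x + β / 2 * ‖x‖ ^ 2))
    (hint : ∀ x : EuclideanSpace ℝ (Fin d), Integrable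
      (fun y : EuclideanSpace ℝ (Fin d) => Real.exp (φ y - ‖x - y‖ ^ 2 / (2 * s)))) :
    ConvexOn ℝ Set.univ (fun x : EuclideanSpace ℝ (Fin d) =>
      Real.log ((2 * Real.pi * s) ^ (-(d : ℝ) / 2) *
        ∫ y : EuclideanSpace ℝ (Fin d), Real.exp (φ y - ‖x - y‖ ^ 2 / (2 * s)))
      + (β / (1 + β * s)) / 2 * ‖x‖ ^ 2) := by
  have ha : 0 < 1 + β * s := by positivity
  set ψ := fun y => φ y + β / 2 * ‖y‖ ^ 2
  set G := fun (x w : EuclideanSpace ℝ (Fin d)) =>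
    ψ ((1 + β * s)⁻¹ • x + w) - (1 + β * s) / (2 * s) * ‖w‖ ^ 2
  have hexp : ∀ x w,
      exp (φ ((1 + β * s)⁻¹ • x + w) - ‖x - ((1 + β * s)⁻¹ • x + w)‖ ^ 2 / (2 * s)) *
        exp (β / (1 + β * s) / 2 * ‖x‖ ^ 2) = exp (G x w) := fun x w => by
    rw [← exp_add]
    congr 1
    simp only [G, ψ]
    linear_combination neg_norm_sub_sq_div_add_norm_sq_eq hs.ne' ha.ne' x w
  have hshift : ∀ x, (∫ y, exp (φ y - ‖x - y‖ ^ 2 / (2 * s))) *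
      exp (β / (1 + β * s) / 2 * ‖x‖ ^ 2) = ∫ w, exp (G x w) := fun x => by
    rw [← integral_add_left_eq_self _ ((1 + β * s)⁻¹ • x), ← integral_mul_const]
    simp only [hexp]
  have hG : ∀ w, ConvexOn ℝ univ (G · w) := fun w =>
    (hφ.comp_smul_add _ w).sub (concaveOn_const _ convex_univ)
  have hGint : ∀ x, Integrable (fun w => exp (G x w)) := fun x =>
    (((hint x).comp_add_left ((1 + β * s)⁻¹ • x)).mul_const _).congr (.of_forall (hexp x))
  have hC : 0 < (2 * π * s) ^ (-(d : ℝ) / 2) := by positivity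
  refine ((convexOn_const (log ((2 * π * s) ^ (-(d : ℝ) / 2))) convex_univ).add
    (ConvexOn.log_integral_exp convex_univ hG fun x _ => hGint x)).congr fun x _ => ?_
  have hJ := integral_exp_pos (hint x)
  simp only [Pi.add_apply]
  rw [← hshift, log_mul hC.ne' hJ.ne', log_mul hJ.ne' (exp_pos _).ne', log_exp]
  ring
end

section
/- Let u : ℝ^d → ℝ be twice continuously differentiable with D²u(y) + β·Id positive definite for all y, and for each x let Y(x) be the unique solution of ∇u(Y(x)) = β(x − Y(x)). Define v(x) := u(Y(x)) + (β/2)|x − Y(x)|². Then ∇v(x) = β(x − Y(x)) = ∇u(Y(x)) and D²v(x) = β·Id − β²(D²u(Y(x)) + β·Id)^{−1}. -/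
/-!
Write `G y = ∇u y + β • y`, so that `G (Y x) = β • x`. The derivative `D²u + β • id` of `G` is
positive definite: this makes `G` injective (it is strictly monotone along every line) and its
derivative invertible, so the inverse function theorem shows that `Y` is differentiable with
`DY x = β • (D²u (Y x) + β • id)⁻¹`. In the derivative of `v` the terms containing `DY` cancel
by the optimality condition `∇u (Y x) = β • (x - Y x)` (envelope theorem), so
`∇v x = β • (x - Y x)`, and differentiating once more gives the Hessian.
-/

open scoped RealInnerProductSpace

/-- Global injectivity of `G` identifies `Y` with the local inverse of `G` composed with `f`,
without knowing beforehand that `Y` is continuous. -/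
theorem HasStrictFDerivAt.hasFDerivAt_of_injective_of_comp_eq {𝕜 D E F : Type*}
    [NontriviallyNormedField 𝕜] [NormedAddCommGroup D] [NormedSpace 𝕜 D]
    [NormedAddCommGroup E] [NormedSpace 𝕜 E] [CompleteSpace E]
    [NormedAddCommGroup F] [NormedSpace 𝕜 F] [CompleteSpace F]
    {G : E → F} {A : E ≃L[𝕜] F} {Y : D → E} {f : D → F} {f' : D →L[𝕜] F} {x : D}
    (hG : HasStrictFDerivAt G (A : E →L[𝕜] F) (Y x)) (hinj : Function.Injective G)
    (hGY : ∀ x, G (Y x) = f x) (hf : HasFDerivAt f f' x) :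
    HasFDerivAt Y ((A.symm : F →L[𝕜] E).comp f') x := by
  have hloc : (fun x' => hG.localInverse G A (Y x) (f x')) =ᶠ[nhds x] Y := by
    have hf_tendsto : Filter.Tendsto f (nhds x) (nhds (G (Y x))) := hGY x ▸ hf.continuousAt
    filter_upwards [hf_tendsto.eventually hG.eventually_right_inverse] with x' hx'
    exact hinj (hx'.trans (hGY x').symm)
  exact ((hGY x ▸ hG.to_localInverse).hasFDerivAt.comp x hf).congr_of_eventuallyEq hloc.symm

section InnerProductSpace

variable {E : Type*} [NormedAddCommGroup E] [InnerProductSpace ℝ E]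

theorem ContDiff.gradient [CompleteSpace E] {u : E → ℝ} {n : WithTop ℕ∞}
    (hu : ContDiff ℝ (n + 1) u) : ContDiff ℝ n (gradient u) :=
  (InnerProductSpace.toDual ℝ E).symm.contDiff.comp (hu.fderiv_right le_rfl)

theorem ContinuousLinearMap.isUnit_of_inner_apply_self_pos [FiniteDimensional ℝ E]
    {A : E →L[ℝ] E} (hA : ∀ w, w ≠ 0 → 0 < ⟪A w, w⟫) : IsUnit A := by
  have hinj : Function.Injective A := by
    refine (injective_iff_map_eq_zero A).2 fun w hw => ?_
    by_contra hw0
    simpa [hw] using hA w hw0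
  exact A.isUnit_iff_bijective.2 ⟨hinj, LinearMap.injective_iff_surjective.1 hinj⟩

theorem injective_of_inner_fderiv_apply_self_pos {G : E → E} {G' : E → E →L[ℝ] E}
    (hG : ∀ y, HasFDerivAt G (G' y) y) (hpos : ∀ y w, w ≠ 0 → 0 < ⟪G' y w, w⟫) :
    Function.Injective G := by
  intro a b hab
  by_contra hne
  set w := a - b
  have hw : w ≠ 0 := sub_ne_zero.2 hne
  have hderiv : ∀ t : ℝ,
      HasDerivAt (fun t : ℝ => ⟪G (b + t • w), w⟫) ⟪G' (b + t • w) w, w⟫ t := by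
    intro t
    have hline : HasDerivAt (fun t : ℝ => b + t • w) w t := by
      simpa using ((hasDerivAt_id t).smul_const w).const_add b
    exact ((hG _).comp_hasDerivAt t hline).inner ℝ (hasDerivAt_const t w) |>.congr_deriv (by simp)
  have hmono : StrictMono fun t : ℝ => ⟪G (b + t • w), w⟫ :=
    strictMono_of_deriv_pos fun t => (hderiv t).deriv ▸ hpos _ w hw
  have := hmono zero_lt_one
  simp [w, hab] at this

theorem hasGradientAt_moreauEnvelope [CompleteSpace E] {u : E → ℝ} {Y : E → E}
    {DY : E →L[ℝ] E} {β : ℝ} {x : E} (hu : DifferentiableAt ℝ u (Y x)) (hY : HasFDerivAt Y DY x)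
    (hopt : gradient u (Y x) = β • (x - Y x)) :
    HasGradientAt (fun x => u (Y x) + β / 2 * ‖x - Y x‖ ^ 2) (β • (x - Y x)) x := by
  rw [hasGradientAt_iff_hasFDerivAt]
  have hdist := ((hasFDerivAt_id x).sub hY).norm_sq.const_mul (β / 2)
  refine ((hu.hasGradientAt.hasFDerivAt.comp x hY).add hdist).congr_fderiv ?_
  ext w
  simp [hopt]
  ring

theorem hasFDerivAt_of_gradient_eq_smul_sub [FiniteDimensional ℝ E] {u : E → ℝ} {β : ℝ}
    (hu : ContDiff ℝ 2 u) (hpos : ∀ y w, w ≠ 0 → 0 < ⟪fderiv ℝ (gradient u) y w + β • w, w⟫)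
    {Y : E → E} (hY : ∀ x, gradient u (Y x) = β • (x - Y x)) (x : E) :
    HasFDerivAt Y
      (β • Ring.inverse (fderiv ℝ (gradient u) (Y x) + β • ContinuousLinearMap.id ℝ E)) x := by
  set A := fun y => fderiv ℝ (gradient u) y + β • ContinuousLinearMap.id ℝ E
  set G := fun y => gradient u y + β • y
  have hG : ∀ y, HasStrictFDerivAt G (A y) y := fun y =>
    ((ContDiff.gradient (n := 1) hu).contDiffAt.hasStrictFDerivAt one_ne_zero).add
      ((hasStrictFDerivAt_id y).const_smul β)
  have hinj : Function.Injective G :=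
    injective_of_inner_fderiv_apply_self_pos (fun y => (hG y).hasFDerivAt) (by simpa [A] using hpos)
  have hGY : ∀ x, G (Y x) = β • x := fun x => by simp [G, hY x, smul_sub]
  obtain ⟨U, hU⟩ := ContinuousLinearMap.isUnit_of_inner_apply_self_pos (A := A (Y x))
    (by simpa [A] using hpos (Y x))
  have hGU : HasStrictFDerivAt G (ContinuousLinearEquiv.ofUnit U : E →L[ℝ] E) (Y x) := by
    convert hG (Y x)
    exact hU
  convert hGU.hasFDerivAt_of_injective_of_comp_eq hinj hGY ((hasFDerivAt_id x).const_smul β)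
    using 1
  change β • Ring.inverse (A (Y x)) = _
  rw [← hU, Ring.inverse_unit]
  rw [ContinuousLinearMap.comp_smul, ContinuousLinearMap.comp_id]
  rfl

end InnerProductSpace

theorem stmt7_general {d : ℕ} (β : ℝ)
    (u : EuclideanSpace ℝ (Fin d) → ℝ) (hu : ContDiff ℝ 2 u)
    (hpos : ∀ y : EuclideanSpace ℝ (Fin d), ∀ v : EuclideanSpace ℝ (Fin d), v ≠ 0 →
      0 < (inner ℝ (fderiv ℝ (gradient u) y v + β • v) v : ℝ))
    (Y : EuclideanSpace ℝ (Fin d) → EuclideanSpace ℝ (Fin d))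
    (hY : ∀ x, gradient u (Y x) = β • (x - Y x))
    (v : EuclideanSpace ℝ (Fin d) → ℝ)
    (hv : ∀ x, v x = u (Y x) + β / 2 * ‖x - Y x‖ ^ 2) :
    ∀ x, gradient v x = β • (x - Y x) ∧ gradient v x = gradient u (Y x) ∧
      fderiv ℝ (gradient v) x =
        β • ContinuousLinearMap.id ℝ (EuclideanSpace ℝ (Fin d)) -
          (β ^ 2) • Ring.inverse
            (fderiv ℝ (gradient u) (Y x) +
              β • ContinuousLinearMap.id ℝ (EuclideanSpace ℝ (Fin d))) := by
  have hYd := hasFDerivAt_of_gradient_eq_smul_sub hu hpos hY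
  have hv_grad : ∀ x, HasGradientAt v (β • (x - Y x)) x := fun x =>
    funext hv ▸ hasGradientAt_moreauEnvelope (hu.differentiable two_ne_zero _) (hYd x) (hY x)
  intro x
  refine ⟨(hv_grad x).gradient, (hv_grad x).gradient.trans (hY x).symm, ?_⟩
  have hv_hess : HasFDerivAt (fun x => β • (x - Y x))
      (β • (ContinuousLinearMap.id ℝ _ - β • Ring.inverse
        (fderiv ℝ (gradient u) (Y x) + β • ContinuousLinearMap.id ℝ _))) x :=
    ((hasFDerivAt_id x).sub (hYd x)).const_smul β
  rw [gradient_eq hv_grad, hv_hess.fderiv, smul_sub, smul_smul, sq]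

theorem stmt7 {d : ℕ} (β : ℝ) (hβ : 0 < β)
    (u : EuclideanSpace ℝ (Fin d) → ℝ) (hu : ContDiff ℝ 2 u)
    (hpos : ∀ y : EuclideanSpace ℝ (Fin d), ∀ v : EuclideanSpace ℝ (Fin d), v ≠ 0 →
      0 < (inner ℝ (fderiv ℝ (gradient u) y v + β • v) v : ℝ))
    (Y : EuclideanSpace ℝ (Fin d) → EuclideanSpace ℝ (Fin d))
    (hY : ∀ x, gradient u (Y x) = β • (x - Y x))
    (v : EuclideanSpace ℝ (Fin d) → ℝ)
    (hv : ∀ x, v x = u (Y x) + β / 2 * ‖x - Y x‖ ^ 2) :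
    ∀ x, gradient v x = β • (x - Y x) ∧ gradient v x = gradient u (Y x) ∧
      fderiv ℝ (gradient v) x =
        β • ContinuousLinearMap.id ℝ (EuclideanSpace ℝ (Fin d)) -
          (β ^ 2) • Ring.inverse
            (fderiv ℝ (gradient u) (Y x) +
              β • ContinuousLinearMap.id ℝ (EuclideanSpace ℝ (Fin d))) :=
  stmt7_general β u hu hpos Y hY v hv
end

section
/- Let φ : ℝ^d → ℝ be β-convex, β > 0, s ∈ (0, T]. Let W_s ~ N(0, s·Id) be a Gaussian vector. Then for every y where ∂(φ + (β/2)|·|²)(y) ∋ ξ, E[e^{φ(y + W_s)}] ≥ e^{φ(y)} (1 + βs)^{−d/2} exp( s|ξ − βy|² / (2(1+βs)) ) ≥ e^{φ(y)} (1+βT)^{−d/2}. Consequently log(N_s * e^φ)(y) ≥ φ(y) − (d/2) log(1+βT). -/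
/-!
By the `β`-convexity inequality at `y`, `φ (y + z)` is bounded below by the concave quadratic
`φ y + ⟪ξ - β • y, z⟫ - (β / 2) ‖z‖²`. Integrating its exponential against the heat kernel is a
Gaussian integral, `E[exp (⟪a, W_s⟫ - (β / 2) ‖W_s‖²)] = (1 + β s)^(-d/2) exp (s ‖a‖² / (2 (1 + β s)))`,
which gives the first bound; the second follows since the exponential factor is at least `1` and
`s ≤ T`, and the third is its logarithm.
-/

open Set MeasureTheory Real RealInnerProductSpace

section Gaussian

variable {V : Type*} [NormedAddCommGroup V] [InnerProductSpace ℝ V]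

theorem exp_neg_sq_norm_div_mul_exp_inner_sub_sq_norm {β s : ℝ} (hs : 0 < s) (a z : V) :
    exp (-‖z‖ ^ 2 / (2 * s)) * exp (⟪a, z⟫ - β / 2 * ‖z‖ ^ 2) =
      exp (-((1 + β * s) / (2 * s)) * ‖z‖ ^ 2 + ⟪a, z⟫) := by
  rw [← exp_add]
  congr 1
  field_simp
  ring

variable [FiniteDimensional ℝ V] [MeasurableSpace V] [BorelSpace V]

theorem integrable_exp_neg_mul_sq_norm_add_inner {b : ℝ} (hb : 0 < b) (w : V) :
    Integrable fun v : V => exp (-b * ‖v‖ ^ 2 + ⟪w, v⟫) := by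
  convert (GaussianFourier.integrable_cexp_neg_mul_sq_norm_add
    (b := (b : ℂ)) (by simpa using hb) 1 w).norm using 2 with v
  rw [Complex.norm_exp]
  norm_num [← Complex.ofReal_pow]

theorem integral_exp_neg_mul_sq_norm_add_inner {b : ℝ} (hb : 0 < b) (w : V) :
    ∫ v : V, exp (-b * ‖v‖ ^ 2 + ⟪w, v⟫) =
      (π / b) ^ ((Module.finrank ℝ V : ℝ) / 2) * exp (‖w‖ ^ 2 / (4 * b)) := by
  have h := GaussianFourier.integral_cexp_neg_mul_sq_norm_add
    (b := (b : ℂ)) (by simpa using hb) 1 w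
  rw [← Complex.ofReal_inj, ← integral_complex_ofReal]
  push_cast
  rw [Complex.ofReal_cpow (by positivity)]
  push_cast
  simpa using h

theorem integrable_gaussian_mul_exp_inner_sub_sq_norm {β s : ℝ} (hs : 0 < s)
    (hβs : 0 < 1 + β * s) (a : V) :
    Integrable fun z : V => (2 * π * s) ^ (-(Module.finrank ℝ V : ℝ) / 2) *
      exp (-‖z‖ ^ 2 / (2 * s)) * exp (⟪a, z⟫ - β / 2 * ‖z‖ ^ 2) := by
  simp_rw [mul_assoc _ (exp _), exp_neg_sq_norm_div_mul_exp_inner_sub_sq_norm hs]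
  exact (integrable_exp_neg_mul_sq_norm_add_inner (by positivity) a).const_mul _

theorem integral_gaussian_mul_exp_inner_sub_sq_norm {β s : ℝ} (hs : 0 < s)
    (hβs : 0 < 1 + β * s) (a : V) :
    ∫ z : V, (2 * π * s) ^ (-(Module.finrank ℝ V : ℝ) / 2) * exp (-‖z‖ ^ 2 / (2 * s)) *
        exp (⟪a, z⟫ - β / 2 * ‖z‖ ^ 2) =
      (1 + β * s) ^ (-(Module.finrank ℝ V : ℝ) / 2) *
        exp (s * ‖a‖ ^ 2 / (2 * (1 + β * s))) := by
  have h2πs : 0 < 2 * π * s := by positivity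
  have hπ : π / ((1 + β * s) / (2 * s)) = 2 * π * s / (1 + β * s) := by field_simp
  have hexp : ‖a‖ ^ 2 / (4 * ((1 + β * s) / (2 * s))) = s * ‖a‖ ^ 2 / (2 * (1 + β * s)) := by
    field_simp
    ring
  have hpow : (2 * π * s) ^ ((Module.finrank ℝ V : ℝ) / 2) ≠ 0 := (rpow_pos_of_pos h2πs _).ne'
  simp_rw [mul_assoc _ (exp _), exp_neg_sq_norm_div_mul_exp_inner_sub_sq_norm hs, integral_const_mul,
    integral_exp_neg_mul_sq_norm_add_inner (by positivity : 0 < (1 + β * s) / (2 * s))]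
  rw [hπ, hexp, div_rpow h2πs.le hβs.le, neg_div, rpow_neg h2πs.le, rpow_neg hβs.le,
    div_eq_mul_inv _ ((1 + β * s) ^ _), ← mul_assoc, inv_mul_cancel_left₀ hpow]

theorem exp_mul_rpow_mul_exp_le_integral_gaussian_mul_exp {f : V → ℝ} {c β s : ℝ} {a : V}
    (hs : 0 < s) (hβs : 0 < 1 + β * s) (hf : ∀ z, c + ⟪a, z⟫ - β / 2 * ‖z‖ ^ 2 ≤ f z)
    (hint : Integrable fun z : V => (2 * π * s) ^ (-(Module.finrank ℝ V : ℝ) / 2) *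
      exp (-‖z‖ ^ 2 / (2 * s)) * exp (f z)) :
    exp c * (1 + β * s) ^ (-(Module.finrank ℝ V : ℝ) / 2) *
        exp (s * ‖a‖ ^ 2 / (2 * (1 + β * s))) ≤
      ∫ z : V, (2 * π * s) ^ (-(Module.finrank ℝ V : ℝ) / 2) * exp (-‖z‖ ^ 2 / (2 * s)) *
        exp (f z) := by
  rw [mul_assoc, ← integral_gaussian_mul_exp_inner_sub_sq_norm hs hβs, ← integral_const_mul]
  refine integral_mono ((integrable_gaussian_mul_exp_inner_sub_sq_norm hs hβs a).const_mul _)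
    hint fun z => ?_
  rw [mul_left_comm, ← exp_add]
  gcongr
  linarith [hf z]

end Gaussian

theorem stmt10_general {d : ℕ} (β T s : ℝ) (hβ : 0 < β)
    (hs : s ∈ Set.Ioc (0 : ℝ) T)
    (φ : EuclideanSpace ℝ (Fin d) → ℝ)
    (y ξ : EuclideanSpace ℝ (Fin d))
    (hξ : ∀ z, φ y + (inner ℝ (ξ - β • y) (z - y) : ℝ) - β / 2 * ‖z - y‖ ^ 2 ≤ φ z)
    (hint : Integrable (fun z : EuclideanSpace ℝ (Fin d) =>
      (2 * Real.pi * s) ^ (-(d : ℝ) / 2) * Real.exp (-‖z‖ ^ 2 / (2 * s)) *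
        Real.exp (φ (y + z)))) :
    Real.exp (φ y) * (1 + β * s) ^ (-(d : ℝ) / 2) *
        Real.exp (s * ‖ξ - β • y‖ ^ 2 / (2 * (1 + β * s)))
      ≤ (∫ z : EuclideanSpace ℝ (Fin d),
          (2 * Real.pi * s) ^ (-(d : ℝ) / 2) * Real.exp (-‖z‖ ^ 2 / (2 * s)) *
            Real.exp (φ (y + z))) ∧
    Real.exp (φ y) * (1 + β * T) ^ (-(d : ℝ) / 2)
      ≤ (∫ z : EuclideanSpace ℝ (Fin d),
          (2 * Real.pi * s) ^ (-(d : ℝ) / 2) * Real.exp (-‖z‖ ^ 2 / (2 * s)) *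
            Real.exp (φ (y + z))) ∧
    φ y - (d : ℝ) / 2 * Real.log (1 + β * T)
      ≤ Real.log (∫ z : EuclideanSpace ℝ (Fin d),
          (2 * Real.pi * s) ^ (-(d : ℝ) / 2) * Real.exp (-‖z‖ ^ 2 / (2 * s)) *
            Real.exp (φ (y + z))) := by
  obtain ⟨hs0, hsT⟩ := hs
  have hβs : 0 < 1 + β * s := by positivity
  have hβT : 0 < 1 + β * T := by nlinarith
  have hsharp := exp_mul_rpow_mul_exp_le_integral_gaussian_mul_exp hs0 hβs
    (fun z => by simpa using hξ (y + z)) (by rwa [finrank_euclideanSpace_fin])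
  rw [finrank_euclideanSpace_fin] at hsharp
  have hTs : (1 + β * T) ^ (-(d : ℝ) / 2) ≤ (1 + β * s) ^ (-(d : ℝ) / 2) :=
    rpow_le_rpow_of_nonpos hβs (by nlinarith) (by have := d.cast_nonneg (α := ℝ); linarith)
  have hdrop : exp (φ y) * (1 + β * T) ^ (-(d : ℝ) / 2) ≤
      exp (φ y) * (1 + β * s) ^ (-(d : ℝ) / 2) *
        exp (s * ‖ξ - β • y‖ ^ 2 / (2 * (1 + β * s))) := by
    rw [mul_assoc]
    gcongr exp (φ y) * ?_
    exact hTs.trans (le_mul_of_one_le_right (by positivity) (one_le_exp (by positivity)))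
  have hcoarse := hdrop.trans hsharp
  refine ⟨hsharp, hcoarse, ?_⟩
  rw [← log_exp (φ y), ← log_rpow hβT, ← log_div (exp_pos _).ne' (by positivity), div_eq_mul_inv,
    ← rpow_neg hβT.le, ← neg_div]
  exact log_le_log (by positivity) hcoarse

theorem stmt10 {d : ℕ} (β T s : ℝ) (hβ : 0 < β) (hT : 0 < T)
    (hs : s ∈ Set.Ioc (0 : ℝ) T)
    (φ : EuclideanSpace ℝ (Fin d) → ℝ)
    (hφ : ConvexOn ℝ Set.univ (fun x => φ x + β / 2 * ‖x‖ ^ 2))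
    (y ξ : EuclideanSpace ℝ (Fin d))
    (hξ : ∀ z, φ y + (inner ℝ (ξ - β • y) (z - y) : ℝ) - β / 2 * ‖z - y‖ ^ 2 ≤ φ z)
    (hint : Integrable (fun z : EuclideanSpace ℝ (Fin d) =>
      (2 * Real.pi * s) ^ (-(d : ℝ) / 2) * Real.exp (-‖z‖ ^ 2 / (2 * s)) *
        Real.exp (φ (y + z)))) :
    Real.exp (φ y) * (1 + β * s) ^ (-(d : ℝ) / 2) *
        Real.exp (s * ‖ξ - β • y‖ ^ 2 / (2 * (1 + β * s)))
      ≤ (∫ z : EuclideanSpace ℝ (Fin d),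
          (2 * Real.pi * s) ^ (-(d : ℝ) / 2) * Real.exp (-‖z‖ ^ 2 / (2 * s)) *
            Real.exp (φ (y + z))) ∧
    Real.exp (φ y) * (1 + β * T) ^ (-(d : ℝ) / 2)
      ≤ (∫ z : EuclideanSpace ℝ (Fin d),
          (2 * Real.pi * s) ^ (-(d : ℝ) / 2) * Real.exp (-‖z‖ ^ 2 / (2 * s)) *
            Real.exp (φ (y + z))) ∧
    φ y - (d : ℝ) / 2 * Real.log (1 + β * T)
      ≤ Real.log (∫ z : EuclideanSpace ℝ (Fin d),
          (2 * Real.pi * s) ^ (-(d : ℝ) / 2) * Real.exp (-‖z‖ ^ 2 / (2 * s)) *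
            Real.exp (φ (y + z))) :=
  stmt10_general β T s hβ hs φ y ξ hξ hint
end

section
/- Let φ : ℝ^d → ℝ be β-convex with φ(0) = 0. Fix η ∈ (0,1), T > 0, and set U := log E[e^{φ(W_{ηT})}] (assumed finite). Then for every R > 0 and x ∈ ℝ^d, φ(x) ≤ U + |x|²/(2ηT) + (1/2)(β + 1/(ηT))R² + log( (2πηT)^{d/2} / |B_R| ), where |B_R| is the Lebesgue volume of the ball of radius R. -/
/-!
Put `ψ = φ + (β/2)‖·‖²`, which is convex, and `F y = φ y - ‖y‖² / (2ηT)`. The barycentre of the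
ball `B_R(x)` is `x`, so Jensen's inequality gives `ψ x ≤ ⨍_{B_R(x)} ψ`, while
`⨍_{B_R(x)} ‖y‖² ≤ ‖x‖² + R²`; together they bound `⨍_{B_R(x)} F` from below by
`φ x - ‖x‖² / (2ηT) - (β + 1/(ηT)) R² / 2`. Jensen's inequality for `exp` then gives
`|B_R| exp (⨍_{B_R(x)} F) ≤ ∫_{B_R(x)} exp F ≤ ∫ exp F`, and taking logarithms yields the bound.
Balls are translated to the origin, so `B_R(x)` appears as `B_R(0)` with integrand `z ↦ F (x + z)`.
-/

open Set MeasureTheory Metric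
open scoped RealInnerProductSpace

theorem continuous_of_convexOn_add_norm_sq {E : Type*} [NormedAddCommGroup E] [NormedSpace ℝ E]
    [FiniteDimensional ℝ E] {φ : E → ℝ} {β : ℝ}
    (hφ : ConvexOn ℝ univ (fun x ↦ φ x + β / 2 * ‖x‖ ^ 2)) : Continuous φ := by
  have hψ : Continuous fun x ↦ φ x + β / 2 * ‖x‖ ^ 2 :=
    continuousOn_univ.mp (hφ.continuousOn isOpen_univ)
  convert hψ.sub (by fun_prop : Continuous fun x : E ↦ β / 2 * ‖x‖ ^ 2) using 1
  ext x
  simp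

section Ball

variable {E : Type*} [NormedAddCommGroup E] [NormedSpace ℝ E] [MeasurableSpace E]

theorem setIntegral_ball_zero_id_eq_zero [BorelSpace E] (μ : Measure E) [μ.IsNegInvariant]
    (r : ℝ) : ∫ z in ball (0 : E) r, z ∂μ = 0 := by
  have hneg : ∫ z in ball (0 : E) r, z ∂μ = -∫ z in ball (0 : E) r, z ∂μ :=
    calc ∫ z in ball (0 : E) r, z ∂μ
        = ∫ z, (ball (0 : E) r).indicator id (-z) ∂μ := by
          rw [integral_neg_eq_self, integral_indicator measurableSet_ball]; rfl
      _ = ∫ z, -(ball (0 : E) r).indicator id z ∂μ := by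
          congr 1 with z
          by_cases hz : ‖z‖ < r <;> simp [indicator, hz]
      _ = -∫ z in ball (0 : E) r, z ∂μ := by
          rw [integral_neg, integral_indicator measurableSet_ball]; rfl
  have htwo : (2 : ℝ) • ∫ z in ball (0 : E) r, z ∂μ = 0 := by
    rw [two_smul]
    nth_rewrite 1 [hneg]
    exact neg_add_cancel _
  exact (smul_eq_zero.mp htwo).resolve_left two_ne_zero

variable [FiniteDimensional ℝ E] (μ : Measure E) [μ.IsAddHaarMeasure]

theorem measureReal_ball_pos (x : E) {r : ℝ} (hr : 0 < r) : 0 < μ.real (ball x r) :=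
  ENNReal.toReal_pos (measure_ball_pos μ x hr).ne' measure_ball_lt_top.ne

variable [BorelSpace E]

theorem Continuous.integrableOn_ball {F : Type*} [NormedAddCommGroup F] {f : E → F}
    (hf : Continuous f) (x : E) (r : ℝ) : IntegrableOn f (ball x r) μ :=
  (hf.continuousOn.integrableOn_compact (isCompact_closedBall x r)).mono_set ball_subset_closedBall

theorem setAverage_ball_zero_add (x : E) {r : ℝ} (hr : 0 < r) :
    ⨍ z in ball (0 : E) r, (x + z) ∂μ = x := by
  rw [setAverage_eq, integral_add (continuous_const.integrableOn_ball μ 0 r)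
    (continuous_id'.integrableOn_ball μ 0 r), setIntegral_ball_zero_id_eq_zero, add_zero,
    setIntegral_const, smul_smul, inv_mul_cancel₀ (measureReal_ball_pos μ 0 hr).ne', one_smul]

theorem ConvexOn.le_setAverage_ball_zero_add {g : E → ℝ} (hg : ConvexOn ℝ univ g) (x : E)
    {r : ℝ} (hr : 0 < r) : g x ≤ ⨍ z in ball (0 : E) r, g (x + z) ∂μ := by
  have hgc : Continuous g := continuousOn_univ.mp (hg.continuousOn isOpen_univ)
  have := hg.map_set_average_le hgc.continuousOn isClosed_univ (measure_ball_pos μ 0 hr).ne'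
    measure_ball_lt_top.ne (.of_forall fun _ ↦ mem_univ _)
    ((continuous_const_add x).integrableOn_ball μ 0 r)
    ((hgc.comp (continuous_const_add x)).integrableOn_ball μ 0 r)
  rwa [setAverage_ball_zero_add μ x hr] at this

theorem measureReal_ball_mul_exp_setAverage_le_integral_exp {F : E → ℝ} (hF : Continuous F)
    (hint : Integrable (fun y ↦ Real.exp (F y)) μ) (x : E) {r : ℝ} (hr : 0 < r) :
    μ.real (ball (0 : E) r) * Real.exp (⨍ z in ball (0 : E) r, F (x + z) ∂μ) ≤
      ∫ y, Real.exp (F y) ∂μ := by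
  have hFx : Continuous fun z ↦ F (x + z) := hF.comp (continuous_const_add x)
  have hjensen := convexOn_exp.map_set_average_le Real.continuous_exp.continuousOn isClosed_univ
    (measure_ball_pos μ 0 hr).ne' measure_ball_lt_top.ne (.of_forall fun _ ↦ mem_univ _)
    (hFx.integrableOn_ball μ 0 r) ((Real.continuous_exp.comp hFx).integrableOn_ball μ 0 r)
  have hV := measureReal_ball_pos μ (0 : E) hr
  calc μ.real (ball (0 : E) r) * Real.exp (⨍ z in ball (0 : E) r, F (x + z) ∂μ)
      ≤ μ.real (ball (0 : E) r) * ⨍ z in ball (0 : E) r, Real.exp (F (x + z)) ∂μ :=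
        mul_le_mul_of_nonneg_left hjensen hV.le
    _ = ∫ z in ball (0 : E) r, Real.exp (F (x + z)) ∂μ := by
        rw [setAverage_eq, smul_eq_mul, mul_inv_cancel_left₀ hV.ne']
    _ ≤ ∫ z, Real.exp (F (x + z)) ∂μ :=
        setIntegral_le_integral (hint.comp_add_left x) (.of_forall fun _ ↦ (Real.exp_pos _).le)
    _ = ∫ y, Real.exp (F y) ∂μ := integral_add_left_eq_self (fun y ↦ Real.exp (F y)) x

end Ball

section InnerProduct

variable {E : Type*} [NormedAddCommGroup E] [InnerProductSpace ℝ E] [FiniteDimensional ℝ E]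
  [MeasurableSpace E] [BorelSpace E] (μ : Measure E) [μ.IsAddHaarMeasure]

theorem setAverage_ball_zero_norm_add_sq_le (x : E) {r : ℝ} (hr : 0 < r) :
    ⨍ z in ball (0 : E) r, ‖x + z‖ ^ 2 ∂μ ≤ ‖x‖ ^ 2 + r ^ 2 := by
  have hpt : ∀ z ∈ ball (0 : E) r, ‖x + z‖ ^ 2 ≤ (‖x‖ ^ 2 + r ^ 2) + 2 * ⟪x, z⟫ := by
    intro z hz
    have hzr : ‖z‖ < r := mem_ball_zero_iff.mp hz
    rw [norm_add_sq_real]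
    nlinarith [norm_nonneg z]
  have hinner : ∫ z in ball (0 : E) r, ⟪x, z⟫ ∂μ = 0 := by
    rw [integral_inner (continuous_id'.integrableOn_ball μ 0 r), setIntegral_ball_zero_id_eq_zero,
      inner_zero_right]
  have hint :
      ∫ z in ball (0 : E) r, ‖x + z‖ ^ 2 ∂μ ≤ μ.real (ball (0 : E) r) * (‖x‖ ^ 2 + r ^ 2) :=
    calc ∫ z in ball (0 : E) r, ‖x + z‖ ^ 2 ∂μ
        ≤ ∫ z in ball (0 : E) r, ((‖x‖ ^ 2 + r ^ 2) + 2 * ⟪x, z⟫) ∂μ :=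
          setIntegral_mono_on
            ((by fun_prop : Continuous fun z ↦ ‖x + z‖ ^ 2).integrableOn_ball μ 0 r)
            ((by fun_prop : Continuous fun z : E ↦ (‖x‖ ^ 2 + r ^ 2) + 2 * ⟪x, z⟫).integrableOn_ball
              μ 0 r)
            measurableSet_ball hpt
      _ = μ.real (ball (0 : E) r) * (‖x‖ ^ 2 + r ^ 2) := by
          rw [integral_add (continuous_const.integrableOn_ball μ 0 r)
            (((by fun_prop : Continuous fun z : E ↦ ⟪x, z⟫).integrableOn_ball μ 0 r).const_mul 2),
            integral_const_mul, hinner, setIntegral_const, smul_eq_mul]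
          ring
  rw [setAverage_eq, smul_eq_mul, inv_mul_le_iff₀ (measureReal_ball_pos μ 0 hr)]
  exact hint

theorem sub_le_setAverage_ball_of_convexOn_add_norm_sq {φ : E → ℝ} {β κ : ℝ}
    (hφ : ConvexOn ℝ univ (fun x ↦ φ x + β / 2 * ‖x‖ ^ 2)) (hκ : 0 ≤ β / 2 + κ) (x : E)
    {r : ℝ} (hr : 0 < r) :
    φ x - κ * ‖x‖ ^ 2 - (β / 2 + κ) * r ^ 2 ≤
      ⨍ z in ball (0 : E) r, (φ (x + z) - κ * ‖x + z‖ ^ 2) ∂μ := by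
  have hφc := continuous_of_convexOn_add_norm_sq hφ
  have hsplit : ∫ z in ball (0 : E) r, (φ (x + z) - κ * ‖x + z‖ ^ 2) ∂μ =
      ∫ z in ball (0 : E) r, (φ (x + z) + β / 2 * ‖x + z‖ ^ 2) ∂μ -
        (β / 2 + κ) * ∫ z in ball (0 : E) r, ‖x + z‖ ^ 2 ∂μ := by
    rw [← integral_const_mul, ← integral_sub
      ((by fun_prop : Continuous fun z ↦ φ (x + z) + β / 2 * ‖x + z‖ ^ 2).integrableOn_ball μ 0 r)
      ((by fun_prop : Continuous fun z ↦ (β / 2 + κ) * ‖x + z‖ ^ 2).integrableOn_ball μ 0 r)]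
    congr 1 with z
    ring
  calc φ x - κ * ‖x‖ ^ 2 - (β / 2 + κ) * r ^ 2
      = (φ x + β / 2 * ‖x‖ ^ 2) - (β / 2 + κ) * (‖x‖ ^ 2 + r ^ 2) := by ring
    _ ≤ ⨍ z in ball (0 : E) r, (φ (x + z) + β / 2 * ‖x + z‖ ^ 2) ∂μ -
          (β / 2 + κ) * ⨍ z in ball (0 : E) r, ‖x + z‖ ^ 2 ∂μ :=
        sub_le_sub (hφ.le_setAverage_ball_zero_add μ x hr)
          (mul_le_mul_of_nonneg_left (setAverage_ball_zero_norm_add_sq_le μ x hr) hκ)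
    _ = ⨍ z in ball (0 : E) r, (φ (x + z) - κ * ‖x + z‖ ^ 2) ∂μ := by
        simp only [setAverage_eq, smul_eq_mul, hsplit]
        ring

end InnerProduct

theorem stmt11_general {d : ℕ} (β T η : ℝ) (hβ : 0 < β) (hT : 0 < T)
    (hη : η ∈ Set.Ioo (0 : ℝ) 1)
    (φ : EuclideanSpace ℝ (Fin d) → ℝ)
    (hφ : ConvexOn ℝ Set.univ (fun x => φ x + β / 2 * ‖x‖ ^ 2))
    (hint : Integrable (fun y : EuclideanSpace ℝ (Fin d) =>
      (2 * Real.pi * (η * T)) ^ (-(d : ℝ) / 2) *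
        Real.exp (φ y - ‖y‖ ^ 2 / (2 * (η * T))))) :
    ∀ R > (0 : ℝ), ∀ x : EuclideanSpace ℝ (Fin d),
      φ x ≤ Real.log (∫ y : EuclideanSpace ℝ (Fin d),
          (2 * Real.pi * (η * T)) ^ (-(d : ℝ) / 2) *
            Real.exp (φ y - ‖y‖ ^ 2 / (2 * (η * T))))
        + ‖x‖ ^ 2 / (2 * (η * T))
        + (1 / 2) * (β + 1 / (η * T)) * R ^ 2
        + Real.log ((2 * Real.pi * (η * T)) ^ ((d : ℝ) / 2) /
            (MeasureTheory.volume (Metric.ball (0 : EuclideanSpace ℝ (Fin d)) R)).toReal) := by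
  intro R hR x
  have ha : 0 < η * T := mul_pos hη.1 hT
  have hπa : 0 < 2 * Real.pi * (η * T) := by positivity
  set κ := (2 * (η * T))⁻¹ with hκ
  have hF : ∀ y : EuclideanSpace ℝ (Fin d), φ y - ‖y‖ ^ 2 / (2 * (η * T)) = φ y - κ * ‖y‖ ^ 2 :=
    fun y ↦ by rw [div_eq_inv_mul]
  simp only [hF] at hint ⊢
  have hexp : Integrable (fun y ↦ Real.exp (φ y - κ * ‖y‖ ^ 2)) :=
    (integrable_const_mul_iff (Real.rpow_pos_of_pos hπa _).ne'.isUnit _).mp hint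
  have hV := measureReal_ball_pos volume (0 : EuclideanSpace ℝ (Fin d)) hR
  have hmean :=
    sub_le_setAverage_ball_of_convexOn_add_norm_sq volume hφ (κ := κ) (by positivity) x hR
  have hjensen := measureReal_ball_mul_exp_setAverage_le_integral_exp volume
    (F := fun y ↦ φ y - κ * ‖y‖ ^ 2) ((continuous_of_convexOn_add_norm_sq hφ).sub (by fun_prop))
    hexp x hR
  have hIpos := (mul_pos hV (Real.exp_pos _)).trans_le hjensen
  have hlog := Real.log_le_log (mul_pos hV (Real.exp_pos _)) hjensen
  rw [Real.log_mul hV.ne' (Real.exp_pos _).ne', Real.log_exp] at hlog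
  rw [← measureReal_def, integral_const_mul,
    Real.log_mul (Real.rpow_pos_of_pos hπa _).ne' hIpos.ne',
    Real.log_div (Real.rpow_pos_of_pos hπa _).ne' hV.ne', Real.log_rpow hπa, Real.log_rpow hπa]
  have hκx : κ * ‖x‖ ^ 2 = ‖x‖ ^ 2 / (2 * (η * T)) := by rw [div_eq_inv_mul]
  have hκR : (β / 2 + κ) * R ^ 2 = 1 / 2 * (β + 1 / (η * T)) * R ^ 2 := by
    rw [hκ]
    field_simp
  linarith

theorem stmt11 {d : ℕ} (β T η : ℝ) (hβ : 0 < β) (hT : 0 < T)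
    (hη : η ∈ Set.Ioo (0 : ℝ) 1)
    (φ : EuclideanSpace ℝ (Fin d) → ℝ)
    (hφ : ConvexOn ℝ Set.univ (fun x => φ x + β / 2 * ‖x‖ ^ 2))
    (hφ0 : φ 0 = 0)
    (hint : Integrable (fun y : EuclideanSpace ℝ (Fin d) =>
      (2 * Real.pi * (η * T)) ^ (-(d : ℝ) / 2) *
        Real.exp (φ y - ‖y‖ ^ 2 / (2 * (η * T))))) :
    ∀ R > (0 : ℝ), ∀ x : EuclideanSpace ℝ (Fin d),
      φ x ≤ Real.log (∫ y : EuclideanSpace ℝ (Fin d),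
          (2 * Real.pi * (η * T)) ^ (-(d : ℝ) / 2) *
            Real.exp (φ y - ‖y‖ ^ 2 / (2 * (η * T))))
        + ‖x‖ ^ 2 / (2 * (η * T))
        + (1 / 2) * (β + 1 / (η * T)) * R ^ 2
        + Real.log ((2 * Real.pi * (η * T)) ^ ((d : ℝ) / 2) /
            (MeasureTheory.volume (Metric.ball (0 : EuclideanSpace ℝ (Fin d)) R)).toReal) :=
  stmt11_general β T η hβ hT hη φ hφ hint
end

section
/- Let φ : ℝ^d → ℝ be continuous with upper bound φ(y) ≤ C_η + |y|²/(2ηT) for constants C_η, η ∈ (0,1), T > 0, and lower bound φ ≥ −m₁ on the unit ball B₁. Then for every s ∈ (0, ηT) there exist constants C_s, a_s > 0 (depending only on β, T, d, η, s, C_η, m₁) such that for all R ≥ 1 and x ∈ ℝ^d, the tail ratio (N_s * (e^φ 1_{B_R^c}))(x) / (N_s * (e^φ 1_{B_R}))(x) ≤ C_s · exp( −(1/4)(1/s − 1/(ηT))R² + a_s|x|² ). -/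
/-!
The normalisation of the heat kernel cancels in the ratio. Put `a = 1/s - 1/(ηT) > 0`. Off `B_R`
the growth bound on `φ` gives `-‖x - y‖²/(2s) + φ y ≤ Cη - a‖y‖²/2 + ‖x‖‖y‖/s`; split `a‖y‖²/2`
into `a‖y‖²/4`, which is at least `aR²/4`, and two copies of `a‖y‖²/8`, one absorbing the cross
term by Young's inequality and one leaving an integrable Gaussian. So the numerator is at most
`exp(Cη - aR²/4 + 2‖x‖²/(as²)) ∫ exp(-a‖y‖²/8)`. On `B₁` we have `φ ≥ -m₁` and
`‖x - y‖² ≤ 2‖x‖² + 2`, so the denominator is at least `exp(-m₁ - 1/s - ‖x‖²/s) vol(B₁)`.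
-/

open MeasureTheory Metric Real

lemma tail_exponent_le {s τ R r u : ℝ} (hs : 0 < s) (hsτ : s < τ) (hR : 0 ≤ R) (hRr : R ≤ r) :
    -(r - u) ^ 2 / (2 * s) + r ^ 2 / (2 * τ) ≤
      -(1 / 4) * (1 / s - 1 / τ) * R ^ 2 + 2 / ((1 / s - 1 / τ) * s ^ 2) * u ^ 2
        - (1 / s - 1 / τ) / 8 * r ^ 2 := by
  set a := 1 / s - 1 / τ with ha
  have ha0 : 0 < a := sub_pos.2 (one_div_lt_one_div_of_lt hs hsτ)
  have hτ : r ^ 2 / (2 * τ) = r ^ 2 / (2 * s) - a / 2 * r ^ 2 := by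
    rw [ha]; field_simp; ring
  have young : r * u / s ≤ a / 8 * r ^ 2 + 2 / (a * s ^ 2) * u ^ 2 := by
    have key : a / 8 * r ^ 2 + 2 / (a * s ^ 2) * u ^ 2 - r * u / s
        = a / 8 * (r - 4 * u / (a * s)) ^ 2 := by
      field_simp; ring
    nlinarith [sq_nonneg (r - 4 * u / (a * s))]
  have hR2 : a * R ^ 2 ≤ a * r ^ 2 := by gcongr
  have hu : 0 ≤ u ^ 2 / (2 * s) := by positivity
  have expand : -(r - u) ^ 2 / (2 * s) + r ^ 2 / (2 * s) = r * u / s - u ^ 2 / (2 * s) := by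
    field_simp; ring
  rw [hτ]
  linarith

section

variable {E : Type*} [SeminormedAddCommGroup E] {φ : E → ℝ} {s τ C R : ℝ}

lemma exp_heat_mul_exp_le_of_le_norm (hs : 0 < s) (hsτ : s < τ) (hR : 0 ≤ R)
    (hub : ∀ y, φ y ≤ C + ‖y‖ ^ 2 / (2 * τ)) (x : E) {y : E} (hy : R ≤ ‖y‖) :
    exp (-‖x - y‖ ^ 2 / (2 * s)) * exp (φ y) ≤
      exp (C + (-(1 / 4) * (1 / s - 1 / τ) * R ^ 2
        + 2 / ((1 / s - 1 / τ) * s ^ 2) * ‖x‖ ^ 2)) * exp (-((1 / s - 1 / τ) / 8) * ‖y‖ ^ 2) := by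
  rw [← exp_add, ← exp_add, exp_le_exp]
  have hdist : (‖y‖ - ‖x‖) ^ 2 ≤ ‖x - y‖ ^ 2 := by
    rw [← sq_abs, norm_sub_rev]
    exact pow_le_pow_left₀ (abs_nonneg _) (abs_norm_sub_norm_le y x) 2
  have htail := tail_exponent_le (u := ‖x‖) hs hsτ hR hy
  have hheat : -‖x - y‖ ^ 2 / (2 * s) ≤ -(‖y‖ - ‖x‖) ^ 2 / (2 * s) := by gcongr
  linarith [hub y]

lemma exp_le_exp_heat_mul_exp_of_norm_le_one (hs : 0 < s) {m : ℝ} (x : E) {y : E} (hy : ‖y‖ ≤ 1)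
    (hφ : -m ≤ φ y) :
    exp (-m - 1 / s - ‖x‖ ^ 2 / s) ≤ exp (-‖x - y‖ ^ 2 / (2 * s)) * exp (φ y) := by
  rw [← exp_add, exp_le_exp]
  have hxy : ‖x - y‖ ^ 2 ≤ 2 + 2 * ‖x‖ ^ 2 := by
    nlinarith [norm_sub_le x y, norm_nonneg (x - y), norm_nonneg y, sq_nonneg (‖x‖ - ‖y‖)]
  have hheat : -(2 + 2 * ‖x‖ ^ 2) / (2 * s) ≤ -‖x - y‖ ^ 2 / (2 * s) := by gcongr
  have e : -(2 + 2 * ‖x‖ ^ 2) / (2 * s) = -(1 / s) - ‖x‖ ^ 2 / s := by field_simp; ring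
  linarith

end

section

variable {V : Type*} [NormedAddCommGroup V] [InnerProductSpace ℝ V] [FiniteDimensional ℝ V]
  [MeasurableSpace V] [BorelSpace V]

lemma integral_exp_neg_mul_sq_norm_pos {b : ℝ} (hb : 0 < b) :
    0 < ∫ v : V, exp (-b * ‖v‖ ^ 2) := by
  rw [GaussianFourier.integral_rexp_neg_mul_sq_norm hb]
  positivity

lemma integrable_exp_neg_mul_sq_norm {b : ℝ} (hb : 0 < b) :
    Integrable fun v : V ↦ exp (-b * ‖v‖ ^ 2) :=
  .of_integral_ne_zero (integral_exp_neg_mul_sq_norm_pos hb).ne'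

variable {φ : V → ℝ} {s τ C R : ℝ}

lemma setIntegral_compl_ball_exp_heat_mul_exp_le (hs : 0 < s) (hsτ : s < τ) (hR : 0 ≤ R)
    (hub : ∀ y, φ y ≤ C + ‖y‖ ^ 2 / (2 * τ)) (x : V) :
    ∫ y in (ball 0 R)ᶜ, exp (-‖x - y‖ ^ 2 / (2 * s)) * exp (φ y) ≤
      exp (C + (-(1 / 4) * (1 / s - 1 / τ) * R ^ 2
        + 2 / ((1 / s - 1 / τ) * s ^ 2) * ‖x‖ ^ 2)) *
        ∫ y : V, exp (-((1 / s - 1 / τ) / 8) * ‖y‖ ^ 2) := by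
  have ha : 0 < (1 / s - 1 / τ) / 8 := by
    linarith [one_div_lt_one_div_of_lt hs hsτ]
  have hg := (integrable_exp_neg_mul_sq_norm (V := V) ha).const_mul
    (exp (C + (-(1 / 4) * (1 / s - 1 / τ) * R ^ 2 + 2 / ((1 / s - 1 / τ) * s ^ 2) * ‖x‖ ^ 2)))
  rw [← integral_const_mul]
  refine (integral_mono_of_nonneg (.of_forall fun y ↦ by positivity) hg.restrict ?_).trans
    (setIntegral_le_integral hg (.of_forall fun y ↦ by positivity))
  filter_upwards [ae_restrict_mem measurableSet_ball.compl] with y hy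
  exact exp_heat_mul_exp_le_of_le_norm hs hsτ hR hub x (by simpa using hy)

lemma le_setIntegral_ball_exp_heat_mul_exp (hs : 0 < s) (hφ : Continuous φ) {m : ℝ}
    (hlb : ∀ y ∈ ball (0 : V) 1, -m ≤ φ y) (hR : 1 ≤ R) (x : V) :
    exp (-m - 1 / s - ‖x‖ ^ 2 / s) * volume.real (ball (0 : V) 1) ≤
      ∫ y in ball 0 R, exp (-‖x - y‖ ^ 2 / (2 * s)) * exp (φ y) := by
  have hint : IntegrableOn (fun y ↦ exp (-‖x - y‖ ^ 2 / (2 * s)) * exp (φ y)) (ball 0 R) :=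
    ((by fun_prop : Continuous fun y ↦ exp (-‖x - y‖ ^ 2 / (2 * s)) * exp (φ y))
      |>.locallyIntegrable.integrableOn_isCompact (isCompact_closedBall 0 R)).mono_set
      ball_subset_closedBall
  calc _ ≤ ∫ y in ball 0 1, exp (-‖x - y‖ ^ 2 / (2 * s)) * exp (φ y) :=
        setIntegral_ge_of_const_le_real measurableSet_ball measure_ball_lt_top.ne
          (fun y hy ↦ exp_le_exp_heat_mul_exp_of_norm_le_one hs x
            (by simpa using (mem_ball_zero_iff.1 hy).le) (hlb y hy))
          (hint.mono_set (ball_subset_ball hR))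
    _ ≤ _ := setIntegral_mono_set hint (.of_forall fun y ↦ by positivity)
        (ball_subset_ball hR).eventuallyLE

end

theorem stmt16_general {d : ℕ} (T η s Cη m₁ : ℝ)
    (hs : s ∈ Set.Ioo (0 : ℝ) (η * T))
    (φ : EuclideanSpace ℝ (Fin d) → ℝ) (hφc : Continuous φ)
    (hub : ∀ y, φ y ≤ Cη + ‖y‖ ^ 2 / (2 * (η * T)))
    (hlb : ∀ y ∈ Metric.ball (0 : EuclideanSpace ℝ (Fin d)) 1, -m₁ ≤ φ y) :
    ∃ Cs > (0 : ℝ), ∃ as > (0 : ℝ), ∀ R ≥ (1 : ℝ), ∀ x : EuclideanSpace ℝ (Fin d),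
      (∫ y in (Metric.ball (0 : EuclideanSpace ℝ (Fin d)) R)ᶜ,
          (2 * Real.pi * s) ^ (-(d : ℝ) / 2) *
            Real.exp (-‖x - y‖ ^ 2 / (2 * s)) * Real.exp (φ y)) /
        (∫ y in Metric.ball (0 : EuclideanSpace ℝ (Fin d)) R,
          (2 * Real.pi * s) ^ (-(d : ℝ) / 2) *
            Real.exp (-‖x - y‖ ^ 2 / (2 * s)) * Real.exp (φ y))
      ≤ Cs * Real.exp (-(1 / 4) * (1 / s - 1 / (η * T)) * R ^ 2 + as * ‖x‖ ^ 2) := by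
  obtain ⟨hs0, hsτ⟩ := hs
  set a := 1 / s - 1 / (η * T)
  have ha : 0 < a := sub_pos.2 (one_div_lt_one_div_of_lt hs0 hsτ)
  set I := ∫ y : EuclideanSpace ℝ (Fin d), exp (-(a / 8) * ‖y‖ ^ 2)
  have hI : 0 < I := integral_exp_neg_mul_sq_norm_pos (by positivity)
  set V := volume.real (ball (0 : EuclideanSpace ℝ (Fin d)) 1)
  have hV : 0 < V :=
    ENNReal.toReal_pos (measure_ball_pos volume 0 one_pos).ne' measure_ball_lt_top.ne
  refine ⟨exp (Cη + m₁ + 1 / s) * I / V, by positivity, 2 / (a * s ^ 2) + 1 / s, by positivity,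
    fun R hR x ↦ ?_⟩
  have hK : (2 * π * s) ^ (-(d : ℝ) / 2) ≠ 0 := (rpow_pos_of_pos (by positivity) _).ne'
  simp_rw [mul_assoc ((2 * π * s) ^ (-(d : ℝ) / 2)), integral_const_mul, mul_div_mul_left _ _ hK]
  calc _ ≤ exp (Cη + (-(1 / 4) * a * R ^ 2 + 2 / (a * s ^ 2) * ‖x‖ ^ 2)) * I /
        (exp (-m₁ - 1 / s - ‖x‖ ^ 2 / s) * V) :=
        div_le_div₀ (by positivity)
          (setIntegral_compl_ball_exp_heat_mul_exp_le hs0 hsτ (by linarith) hub x)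
          (by positivity) (le_setIntegral_ball_exp_heat_mul_exp hs0 hφc hlb hR x)
    _ = _ := by
        have hsplit : exp (Cη + (-(1 / 4) * a * R ^ 2 + 2 / (a * s ^ 2) * ‖x‖ ^ 2)) =
            exp (Cη + m₁ + 1 / s) *
              exp (-(1 / 4) * a * R ^ 2 + (2 / (a * s ^ 2) + 1 / s) * ‖x‖ ^ 2) *
              exp (-m₁ - 1 / s - ‖x‖ ^ 2 / s) := by
          rw [← exp_add, ← exp_add]
          ring_nf
        rw [hsplit]
        field_simp

theorem stmt16 {d : ℕ} (β T η s Cη m₁ : ℝ) (hβ : 0 < β) (hT : 0 < T)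
    (hη : η ∈ Set.Ioo (0 : ℝ) 1) (hs : s ∈ Set.Ioo (0 : ℝ) (η * T))
    (φ : EuclideanSpace ℝ (Fin d) → ℝ) (hφc : Continuous φ)
    (hub : ∀ y, φ y ≤ Cη + ‖y‖ ^ 2 / (2 * (η * T)))
    (hlb : ∀ y ∈ Metric.ball (0 : EuclideanSpace ℝ (Fin d)) 1, -m₁ ≤ φ y) :
    ∃ Cs > (0 : ℝ), ∃ as > (0 : ℝ), ∀ R ≥ (1 : ℝ), ∀ x : EuclideanSpace ℝ (Fin d),
      (∫ y in (Metric.ball (0 : EuclideanSpace ℝ (Fin d)) R)ᶜ,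
          (2 * Real.pi * s) ^ (-(d : ℝ) / 2) *
            Real.exp (-‖x - y‖ ^ 2 / (2 * s)) * Real.exp (φ y)) /
        (∫ y in Metric.ball (0 : EuclideanSpace ℝ (Fin d)) R,
          (2 * Real.pi * s) ^ (-(d : ℝ) / 2) *
            Real.exp (-‖x - y‖ ^ 2 / (2 * s)) * Real.exp (φ y))
      ≤ Cs * Real.exp (-(1 / 4) * (1 / s - 1 / (η * T)) * R ^ 2 + as * ‖x‖ ^ 2) :=
  stmt16_general T η s Cη m₁ hs φ hφc hub hlb
end
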